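/- arXiv:1307.5602 — 3 statements merged into one kernel-verified Lean document; each statement's English description precedes it below -/
import Mathlib

section
/- The projection of preference of consequences in a matrix scheme (Θ, D) is unique if and only if the domination relation on D is connected. -/
theorem exists_proj_aux {Θ : Type*} {D : Set (Θ → ℝ)} (Dom : D → D → Prop)
    (hDom : ∀ a b : D, Dom a b ↔ ((∀ θ, a.1 θ ≤ b.1 θ) ∧ ∃ θ, a.1 θ < b.1 θ))
    (a b : D) (hne : a ≠ b) (h1 : ¬ Dom a b) (h2 : ¬ Dom b a) :
    ∃ P : D → D → Prop,
      ((∀ x y, P x y → ¬ P y x) ∧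
       (∀ x y z, ¬ P x y → ¬ P y z → ¬ P x z) ∧
       (∀ x y, Dom x y → P x y)) ∧ P a b := by
  have domIrr : ∀ x : D, ¬ Dom x x := fun x hx => by
    obtain ⟨-, θ, hθ⟩ := (hDom x x).1 hx; exact lt_irrefl _ hθ
  have domTrans : ∀ x y z : D, Dom x y → Dom y z → Dom x z := by
    intro x y z hxy hyz
    obtain ⟨hle1, θ, hθ⟩ := (hDom x y).1 hxy
    obtain ⟨hle2, -⟩ := (hDom y z).1 hyz
    exact (hDom x z).2 ⟨fun t => (hle1 t).trans (hle2 t), θ, lt_of_lt_of_le hθ (hle2 θ)⟩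
  set Le : D → D → Prop := fun x y => Dom x y ∨ x = y with hLe
  have leRefl : ∀ x, Le x x := fun x => Or.inr rfl
  have leTrans : ∀ x y z, Le x y → Le y z → Le x z := by
    rintro x y z (h | rfl) (h' | rfl)
    · exact Or.inl (domTrans _ _ _ h h')
    · exact Or.inl h
    · exact Or.inl h'
    · exact Or.inr rfl
  have leAntisymm : ∀ x y, Le x y → Le y x → x = y := by
    rintro x y (h | h) (h' | h')
    · exact absurd (domTrans _ _ _ h h') (domIrr x)
    · exact h'.symm
    · exact h
    · exact h
  have hba : ¬ Le b a := by rintro (h | rfl); exacts [h2 h, hne rfl]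
  let r : D → D → Prop := fun x y => Le x y ∨ (Le x a ∧ Le b y)
  haveI : IsPartialOrder D r :=
    { refl := fun x => Or.inl (leRefl x)
      trans := by
        rintro x y z (h | ⟨h, h'⟩) (g | ⟨g, g'⟩)
        · exact Or.inl (leTrans _ _ _ h g)
        · exact Or.inr ⟨leTrans _ _ _ h g, g'⟩
        · exact Or.inr ⟨h, leTrans _ _ _ h' g⟩
        · exact absurd (leTrans _ _ _ h' g) hba
      antisymm := by
        rintro x y (h | ⟨h, h'⟩) (g | ⟨g, g'⟩)
        · exact leAntisymm _ _ h g
        · exact absurd (leTrans _ _ _ g' (leTrans _ _ _ h g)) hba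
        · exact absurd (leTrans _ _ _ h' (leTrans _ _ _ g h)) hba
        · exact absurd (leTrans _ _ _ h' g) hba }
  obtain ⟨s, hs, hrs⟩ := extend_partialOrder r
  haveI := hs
  refine ⟨fun x y => s x y ∧ x ≠ y, ⟨?_, ?_, ?_⟩, ?_⟩
  · rintro x y ⟨hxy, hne'⟩ ⟨hyx, -⟩
    exact hne' (antisymm hxy hyx)
  · intro x y z hxy hyz hxz
    obtain ⟨hsxz, hnexz⟩ := hxz
    have hsy : ∀ u v : D, ¬ (s u v ∧ u ≠ v) → s v u := by
      intro u v h
      rcases eq_or_ne u v with rfl | huv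
      · exact refl_of s u
      · rcases total_of s u v with h' | h'
        · exact absurd ⟨h', huv⟩ h
        · exact h'
    exact hnexz (antisymm hsxz (trans_of s (hsy y z hyz) (hsy x y hxy)))
  · intro x y hxy
    refine ⟨hrs _ _ (Or.inl (Or.inl hxy)), ?_⟩
    rintro rfl; exact domIrr x hxy
  · exact ⟨hrs _ _ (Or.inr ⟨leRefl a, leRefl b⟩), hne⟩

/-- The projection of preference of consequences in a matrix scheme `(Θ, D)` is
unique if and only if the domination relation on `D` is connected. -/
theorem projection_unique_iff_connected {Θ : Type*} (D : Set (Θ → ℝ))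
    (Dom : D → D → Prop)
    (hDom : ∀ a b : D, Dom a b ↔ ((∀ θ, a.1 θ ≤ b.1 θ) ∧ ∃ θ, a.1 θ < b.1 θ)) :
    (∀ P₁ P₂ : D → D → Prop,
      ((∀ a b, P₁ a b → ¬ P₁ b a) ∧
       (∀ a b c, ¬ P₁ a b → ¬ P₁ b c → ¬ P₁ a c) ∧
       (∀ a b, Dom a b → P₁ a b)) →
      ((∀ a b, P₂ a b → ¬ P₂ b a) ∧
       (∀ a b c, ¬ P₂ a b → ¬ P₂ b c → ¬ P₂ a c) ∧
       (∀ a b, Dom a b → P₂ a b)) →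
      P₁ = P₂) ↔
    (∀ a b : D, a ≠ b → Dom a b ∨ Dom b a) := by
  constructor
  · intro h
    by_contra hcon
    push_neg at hcon
    obtain ⟨a, b, hne, h1, h2⟩ := hcon
    obtain ⟨P₁, hP₁, hP₁ab⟩ := exists_proj_aux Dom hDom a b hne h1 h2
    obtain ⟨P₂, hP₂, hP₂ba⟩ := exists_proj_aux Dom hDom b a hne.symm h2 h1
    have := h P₁ P₂ hP₁ hP₂
    subst this
    exact hP₁.1 a b hP₁ab hP₂ba
  · intro hconn P₁ P₂ hP₁ hP₂
    have key : ∀ (P : D → D → Prop),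
        ((∀ a b, P a b → ¬ P b a) ∧
         (∀ a b c, ¬ P a b → ¬ P b c → ¬ P a c) ∧
         (∀ a b, Dom a b → P a b)) → ∀ x y, P x y ↔ Dom x y := by
      rintro P ⟨hasym, -, hext⟩ x y
      constructor
      · intro hxy
        rcases eq_or_ne x y with rfl | hne
        · exact absurd hxy (hasym x x hxy)
        · rcases hconn x y hne with h | h
          · exact h
          · exact absurd hxy (hasym y x (hext y x h))
      · exact hext x y
    funext x y
    exact propext ((key P₁ hP₁ x y).trans (key P₂ hP₂ x y).symm)
end

section
/- A matrix scheme (Θ, D) contains uncertainty (i.e., the projection of preference of consequences is not unique) if and only if there exist d₁, d₂ ∈ D and θ, θ' ∈ Θ such that d₁(θ) < d₂(θ) and d₂(θ') < d₁(θ'). -/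
/-!
If any two elements of `D` are comparable pointwise, domination is connected, and an asymmetric
relation containing a connected one cannot contain anything more: every projection is domination
itself. Conversely, if `d₁` and `d₂` cross, each of `d₁ ≤ d₂` and `d₂ ≤ d₁` can be adjoined to the
pointwise order without losing antisymmetry; the strict parts of linear extensions of the two
enlarged orders (Szpilrajn) are projections that rank `d₁` and `d₂` in opposite ways.
-/

def IsProjection {α : Type*} (dom P : α → α → Prop) : Prop :=
  (∀ a b, P a b → ¬ P b a) ∧
  (∀ a b c, ¬ P a b → ¬ P b c → ¬ P a c) ∧
  (∀ a b, dom a b → P a b)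

theorem IsProjection.eq_of_connected {α : Type*} {dom P : α → α → Prop}
    (hP : IsProjection dom P) (hdom : ∀ a b, a ≠ b → dom a b ∨ dom b a) : P = dom := by
  obtain ⟨hasymm, -, hext⟩ := hP
  funext a b
  refine propext ⟨fun hab => ?_, hext a b⟩
  have hne : a ≠ b := by
    rintro rfl
    exact hasymm a a hab hab
  exact (hdom a b hne).resolve_right fun hba => hasymm a b hab (hext b a hba)

section Preorder

variable {α : Type*} [Preorder α]

theorem isProjection_lt_of_isLinearOrder (s : α → α → Prop) [IsLinearOrder α s]
    (hs : ∀ a b, a ≤ b → s a b) : IsProjection (· < ·) (fun a b => ¬ s b a) := by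
  refine ⟨fun a b hab hba => ?_, fun a b c hab hbc => ?_, fun a b hab hba => ?_⟩
  · exact (Std.Total.total a b).elim hba hab
  · exact not_not.mpr (IsTrans.trans c b a (not_not.mp hbc) (not_not.mp hab))
  · have : a = b := Std.Antisymm.antisymm a b (hs a b hab.le) hba
    exact hab.ne this

end Preorder

section PartialOrder

variable {α : Type*} [PartialOrder α]

theorem isPartialOrder_le_or_le_and_le {x y : α} (h : ¬ y ≤ x) :
    IsPartialOrder α (fun a b => a ≤ b ∨ (a ≤ x ∧ y ≤ b)) where
  refl _ := .inl le_rfl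
  trans _ _ _
    | .inl hab, .inl hbc => .inl (hab.trans hbc)
    | .inl hab, .inr ⟨hbx, hyc⟩ => .inr ⟨hab.trans hbx, hyc⟩
    | .inr ⟨hax, hyb⟩, .inl hbc => .inr ⟨hax, hyb.trans hbc⟩
    | .inr ⟨_, hyb⟩, .inr ⟨hbx, _⟩ => absurd (hyb.trans hbx) h
  antisymm _ _
    | .inl hab, .inl hba => hab.antisymm hba
    | .inl hab, .inr ⟨hbx, hya⟩ => absurd ((hya.trans hab).trans hbx) h
    | .inr ⟨hax, hyb⟩, .inl hba => absurd ((hyb.trans hba).trans hax) h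
    | .inr ⟨_, hyb⟩, .inr ⟨hbx, _⟩ => absurd (hyb.trans hbx) h

theorem exists_isProjection_lt_of_not_le {x y : α} (h : ¬ y ≤ x) :
    ∃ P, IsProjection (· < ·) P ∧ P x y := by
  have := isPartialOrder_le_or_le_and_le h
  obtain ⟨s, hs, hle⟩ := extend_partialOrder (fun a b => a ≤ b ∨ (a ≤ x ∧ y ≤ b))
  refine ⟨fun a b => ¬ s b a, isProjection_lt_of_isLinearOrder s fun a b hab => hle a b (.inl hab),
    fun hyx => ?_⟩
  have hxy : x = y := Std.Antisymm.antisymm x y (hle x y (.inr ⟨le_rfl, le_rfl⟩)) hyx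
  exact h hxy.ge

theorem exists_isProjection_ne_iff_exists_incompRel :
    (∃ P₁ P₂ : α → α → Prop, IsProjection (· < ·) P₁ ∧ IsProjection (· < ·) P₂ ∧ P₁ ≠ P₂) ↔
      ∃ x y : α, IncompRel (· ≤ ·) x y := by
  constructor
  · rintro ⟨P₁, P₂, hP₁, hP₂, hne⟩
    by_contra! hcomparable
    have hconn : ∀ a b : α, a ≠ b → a < b ∨ b < a := fun a b hab => by
      by_cases hle : a ≤ b
      · exact .inl (hle.lt_of_ne hab)
      · have hba : b ≤ a := not_not.mp fun hba => hcomparable a b ⟨hle, hba⟩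
        exact .inr (hba.lt_of_ne hab.symm)
    exact hne ((hP₁.eq_of_connected hconn).trans (hP₂.eq_of_connected hconn).symm)
  · rintro ⟨x, y, hyx, hxy⟩
    obtain ⟨P₁, hP₁, hP₁xy⟩ := exists_isProjection_lt_of_not_le hxy
    obtain ⟨P₂, hP₂, hP₂yx⟩ := exists_isProjection_lt_of_not_le hyx
    exact ⟨P₁, P₂, hP₁, hP₂, fun h => hP₂.1 y x hP₂yx (h ▸ hP₁xy)⟩

end PartialOrder

theorem Pi.incompRel_le_iff {Θ β : Type*} [LinearOrder β] {f g : Θ → β} :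
    IncompRel (· ≤ ·) f g ↔ ∃ θ θ', f θ < g θ ∧ g θ' < f θ' := by
  simp only [IncompRel, Pi.le_def, not_forall, not_le]
  exact ⟨fun ⟨⟨θ', h'⟩, ⟨θ, h⟩⟩ => ⟨θ, θ', h, h'⟩, fun ⟨θ, θ', h, h'⟩ => ⟨⟨θ', h'⟩, ⟨θ, h⟩⟩⟩

/-- A matrix scheme `(Θ, D)` contains uncertainty (the projection of preference of
consequences is not unique) iff there are `d₁ d₂ ∈ D` and `θ, θ'` with
`d₁ θ < d₂ θ` and `d₂ θ' < d₁ θ'`. -/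
theorem uncertainty_iff {Θ : Type*} (D : Set (Θ → ℝ))
    (Dom : D → D → Prop)
    (hDom : ∀ a b : D, Dom a b ↔ ((∀ θ, a.1 θ ≤ b.1 θ) ∧ ∃ θ, a.1 θ < b.1 θ)) :
    (∃ P₁ P₂ : D → D → Prop,
      ((∀ a b, P₁ a b → ¬ P₁ b a) ∧
       (∀ a b c, ¬ P₁ a b → ¬ P₁ b c → ¬ P₁ a c) ∧
       (∀ a b, Dom a b → P₁ a b)) ∧
      ((∀ a b, P₂ a b → ¬ P₂ b a) ∧
       (∀ a b c, ¬ P₂ a b → ¬ P₂ b c → ¬ P₂ a c) ∧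
       (∀ a b, Dom a b → P₂ a b)) ∧
      P₁ ≠ P₂) ↔
    (∃ d₁ ∈ D, ∃ d₂ ∈ D, ∃ θ θ' : Θ, d₁ θ < d₂ θ ∧ d₂ θ' < d₁ θ') := by
  obtain rfl : Dom = (· < ·) := funext₂ fun a b => propext ((hDom a b).trans Pi.lt_def.symm)
  refine (exists_isProjection_ne_iff_exists_incompRel (α := D)).trans ?_
  constructor
  · rintro ⟨⟨d₁, h₁⟩, ⟨d₂, h₂⟩, hincomp⟩
    exact ⟨d₁, h₁, d₂, h₂, Pi.incompRel_le_iff.mp hincomp⟩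
  · rintro ⟨d₁, h₁, d₂, h₂, hcross⟩
    exact ⟨⟨d₁, h₁⟩, ⟨d₂, h₂⟩, Pi.incompRel_le_iff.mpr hcross⟩
end

section
/- If domination on a matrix scheme (Θ, D) is connected, then every relation satisfying the projection conditions (asymmetric, negatively transitive, extending domination) equals domination; in particular any projection is antisymmetric in the sense that d₁ ≺ᴾ d₂ implies d₁ ≤ d₂ pointwise. -/
/-- If domination on a matrix scheme `(Θ, D)` is connected, then every projection
(asymmetric, negatively transitive, extending domination) equals domination; in
particular `d₁ ≺ᴾ d₂` implies `d₁ ≤ d₂` pointwise. -/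
theorem projection_eq_domination_of_connected {Θ : Type*} (D : Set (Θ → ℝ))
    (Dom : D → D → Prop)
    (hDom : ∀ a b : D, Dom a b ↔ ((∀ θ, a.1 θ ≤ b.1 θ) ∧ ∃ θ, a.1 θ < b.1 θ))
    (conn : ∀ a b : D, a ≠ b → Dom a b ∨ Dom b a)
    (P : D → D → Prop)
    (asymm : ∀ a b, P a b → ¬ P b a)
    (negtrans : ∀ a b c, ¬ P a b → ¬ P b c → ¬ P a c)
    (ext : ∀ a b, Dom a b → P a b) :
    P = Dom ∧ (∀ a b : D, P a b → ∀ θ, a.1 θ ≤ b.1 θ) := by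
  have key : ∀ a b, P a b → Dom a b := by
    intro a b hab
    have hne : a ≠ b := by
      rintro rfl
      exact asymm a a hab hab
    rcases conn a b hne with h | h
    · exact h
    · exact absurd (ext b a h) (asymm a b hab)
  constructor
  · funext a b
    exact propext ⟨key a b, ext a b⟩
  · intro a b hab θ
    exact ((hDom a b).mp (key a b hab)).1 θ
end
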